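/- arXiv:1509.03626 — 2 statements merged into one kernel-verified Lean document; each statement's English description precedes it below -/
import Mathlib

section
/- Let Λ be a connected simple graph with nonempty vertex set V and let G be a group. The map f ↦ φ_f, where φ_f(u,v) = (f u)⁻¹·(f v) for adjacent u, v, induces a bijection from the quotient of the set of functions V → G by the action of global left multiplication (g·f := v ↦ g·(f v)) onto the set of flat G-valued gauge fields on Λ. -/
/-- A `G`-valued gauge field on a simple graph assigns a group element to every ordered pair
of adjacent vertices (i.e. to every dart), with reversed darts getting inverse values. -/
def IsGaugeField {V : Type*} {G : Type*} [Group G] {Λ : SimpleGraph V}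
    (φ : Λ.Dart → G) : Prop :=
  ∀ d : Λ.Dart, φ d.symm = (φ d)⁻¹

/-- The holonomy of a gauge field along a walk. -/
def holonomy {V : Type*} {G : Type*} [Group G] {Λ : SimpleGraph V}
    (φ : Λ.Dart → G) {u v : V} (p : Λ.Walk u v) : G :=
  (p.darts.map φ).prod

/-- A gauge field is flat if its holonomy along every closed walk equals `1`. -/
def IsFlat {V : Type*} {G : Type*} [Group G] {Λ : SimpleGraph V}
    (φ : Λ.Dart → G) : Prop :=
  ∀ (u : V) (p : Λ.Walk u u), holonomy φ p = 1

/-- Two vertex configurations are equivalent when they differ by global left multiplication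
by a single group element. -/
def globalSymmSetoid (V : Type*) (G : Type*) [Group G] : Setoid (V → G) where
  r f f' := ∃ g : G, ∀ v : V, f v = g * f' v
  iseqv := by
    refine ⟨fun f => ⟨1, fun v => (one_mul _).symm⟩, ?_, ?_⟩
    · rintro f f' ⟨g, h⟩
      exact ⟨g⁻¹, fun v => by rw [h v, inv_mul_cancel_left]⟩
    · rintro f f' f'' ⟨g, h⟩ ⟨g', h'⟩
      exact ⟨g * g', fun v => by rw [h v, h' v, mul_assoc]⟩

section Aux
variable {V : Type*} {G : Type*} [Group G] {Λ : SimpleGraph V}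

lemma holonomy_append (φ : Λ.Dart → G) {u v w : V} (p : Λ.Walk u v) (q : Λ.Walk v w) :
    holonomy φ (p.append q) = holonomy φ p * holonomy φ q := by
  simp [holonomy, SimpleGraph.Walk.darts_append]

lemma holonomy_reverse (φ : Λ.Dart → G) (hφ : IsGaugeField φ) {u v : V} (p : Λ.Walk u v) :
    holonomy φ p.reverse = (holonomy φ p)⁻¹ := by
  induction p with
  | nil => simp [holonomy]
  | cons h p ih =>
    rw [SimpleGraph.Walk.reverse_cons, holonomy_append, ih]
    simp only [holonomy, SimpleGraph.Walk.darts_cons, SimpleGraph.Walk.darts_nil,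
      List.map_cons, List.map_nil, List.prod_cons, List.prod_nil, mul_one, mul_inv_rev]
    congr 1
    exact hφ ⟨(_, _), h⟩

lemma holonomy_phi (f : V → G) {u v : V} (p : Λ.Walk u v) :
    holonomy (fun d : Λ.Dart => (f d.fst)⁻¹ * f d.snd) p = (f u)⁻¹ * f v := by
  induction p with
  | nil => simp [holonomy]
  | cons h p ih =>
    simp only [holonomy, SimpleGraph.Walk.darts_cons, List.map_cons, List.prod_cons]
    rw [show ((p.darts.map fun d : Λ.Dart => (f d.fst)⁻¹ * f d.snd).prod) = _ from ih]
    group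

end Aux

/-- For a connected simple graph on a nonempty vertex set and a group `G`,
the map `f ↦ φ_f`, `φ_f(u,v) = (f u)⁻¹ * (f v)`, induces a bijection from the quotient of
`V → G` by global left multiplication onto the set of flat `G`-valued gauge fields. -/
theorem gauging_bijection {V : Type*} {G : Type*} [Group G]
    (Λ : SimpleGraph V) (hΛ : Λ.Connected) :
    ∃ F : Quotient (globalSymmSetoid V G) →
        {φ : Λ.Dart → G // IsGaugeField φ ∧ IsFlat φ},
      Function.Bijective F ∧
        ∀ f : V → G, (F (Quotient.mk (globalSymmSetoid V G) f)).val =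
          fun d : Λ.Dart => (f d.fst)⁻¹ * f d.snd := by

  classical
  obtain ⟨v0⟩ := hΛ.nonempty
  set φof : (V → G) → (Λ.Dart → G) := fun f d => (f d.fst)⁻¹ * f d.snd with hφof
  have hgauge : ∀ f, IsGaugeField (φof f) := by
    intro f d
    simp [φof, SimpleGraph.Dart.symm]
  have hflat : ∀ f, IsFlat (φof f) := by
    intro f u p
    rw [hφof, holonomy_phi f p, inv_mul_cancel]
  have hresp : ∀ f f', (globalSymmSetoid V G).r f f' → φof f = φof f' := by
    rintro f f' ⟨g, hg⟩
    funext d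
    simp [φof, hg, mul_assoc, mul_inv_rev]
  refine ⟨Quotient.lift (fun f => (⟨φof f, hgauge f, hflat f⟩ :
      {φ : Λ.Dart → G // IsGaugeField φ ∧ IsFlat φ}))
      (fun f f' h => Subtype.ext (hresp f f' h)), ⟨?_, ?_⟩, fun f => rfl⟩
  · -- injective
    intro x y hxy
    induction x using Quotient.inductionOn with | h f =>
    induction y using Quotient.inductionOn with | h f' =>
    have heq : φof f = φof f' := congrArg Subtype.val hxy
    refine Quotient.sound ⟨f v0 * (f' v0)⁻¹, fun v => ?_⟩
    obtain ⟨p⟩ := hΛ.preconnected v0 v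
    have key : holonomy (φof f) p = holonomy (φof f') p := by rw [heq]
    simp only [hφof] at key
    rw [holonomy_phi f p, holonomy_phi f' p] at key
    rw [mul_assoc, ← key]
    group
  · -- surjective
    rintro ⟨φ, hφg, hφf⟩
    set f : V → G := fun v => holonomy φ (hΛ.preconnected v0 v).some with hf
    refine ⟨Quotient.mk _ f, Subtype.ext ?_⟩
    funext d
    have key : holonomy φ (((hΛ.preconnected v0 d.fst).some.append
        (SimpleGraph.Walk.cons d.adj SimpleGraph.Walk.nil)).append
        (hΛ.preconnected v0 d.snd).some.reverse) = 1 := hφf v0 _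
    rw [holonomy_append, holonomy_append, holonomy_reverse φ hφg] at key
    have hd : holonomy φ (SimpleGraph.Walk.cons d.adj SimpleGraph.Walk.nil) = φ d := by
      simp [holonomy]
    rw [hd] at key
    have : f d.fst * φ d = f d.snd := by
      have := mul_eq_one_iff_eq_inv.mp key
      simpa [hf] using this.trans (inv_inv _)
    show (f d.fst)⁻¹ * f d.snd = φ d
    rw [← this]
    group
end

section
/- Let n ≥ 1, H = ((Fin n → Bool) → ℂ), 𝒫 the Pauli group, and C_m the Clifford hierarchy as defined below. Suppose m ≥ 1 and U is a unitary on H with U ∈ C_m and U ∉ C_{m−1}. Then there exist Pauli operators P₁, …, P_m ∈ 𝒫 such that the m-fold sequential group commutator K(⋯K(K(U, P₁), P₂)⋯, P_m) is not the identity, where K(A,B) = A⁻¹B⁻¹AB. -/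
/-- The Hilbert space of `n` qubits: `(Fin n → Bool) → ℂ` with its standard Hermitian
inner product. -/
abbrev QHilb (n : ℕ) : Type := EuclideanSpace ℂ (Fin n → Bool)

/-- Flipping the `j`-th bit, as a permutation of basis configurations. -/
def bitFlip {n : ℕ} (j : Fin n) : (Fin n → Bool) ≃ (Fin n → Bool) :=
  Function.Involutive.toPerm (fun x => Function.update x j (!(x j)))
    (fun x => by
      funext k
      by_cases hk : k = j
      · subst hk; simp
      · simp [Function.update_of_ne hk])

/-- The bit-flip (Pauli `X`) unitary on the `j`-th qubit:
`(X_j f)(x) = f(x with the j-th bit flipped)`. -/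
noncomputable def Xu {n : ℕ} (j : Fin n) : QHilb n ≃ₗᵢ[ℂ] QHilb n where
  toLinearEquiv :=
    { toFun := fun f => WithLp.toLp 2 (fun x => f (Function.update x j (!(x j))))
      invFun := fun f => WithLp.toLp 2 (fun x => f (Function.update x j (!(x j))))
      map_add' := fun f f' => rfl
      map_smul' := fun c f => rfl
      left_inv := fun f => by
        ext x
        show f (Function.update (Function.update x j (!(x j))) j
          (!(Function.update x j (!(x j)) j))) = f x
        refine congrArg (WithLp.ofLp f) ?_
        funext k
        by_cases hk : k = j
        · subst hk; simp
        · simp [Function.update_of_ne hk]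
      right_inv := fun f => by
        ext x
        show f (Function.update (Function.update x j (!(x j))) j
          (!(Function.update x j (!(x j)) j))) = f x
        refine congrArg (WithLp.ofLp f) ?_
        funext k
        by_cases hk : k = j
        · subst hk; simp
        · simp [Function.update_of_ne hk] }
  norm_map' := fun f => by
    rw [EuclideanSpace.norm_eq, EuclideanSpace.norm_eq]
    congr 1
    exact Equiv.sum_comp (bitFlip j) (fun x => ‖f x‖ ^ 2)

/-- The sign (Pauli `Z`) unitary on the `j`-th qubit: `(Z_j f)(x) = (−1)^{x_j}·f(x)`. -/
noncomputable def Zu {n : ℕ} (j : Fin n) : QHilb n ≃ₗᵢ[ℂ] QHilb n where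
  toLinearEquiv :=
    { toFun := fun f => WithLp.toLp 2 (fun x => (-1 : ℂ) ^ (if x j then 1 else 0 : ℕ) * f x)
      invFun := fun f => WithLp.toLp 2 (fun x => (-1 : ℂ) ^ (if x j then 1 else 0 : ℕ) * f x)
      map_add' := fun f f' => by ext x; simp [mul_add]
      map_smul' := fun c f => by ext x; simp; try ring
      left_inv := fun f => by
        ext x
        show (-1 : ℂ) ^ _ * ((-1 : ℂ) ^ _ * f x) = f x
        rw [← mul_assoc, ← pow_add, Even.neg_one_pow ⟨_, rfl⟩, one_mul]
      right_inv := fun f => by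
        ext x
        show (-1 : ℂ) ^ _ * ((-1 : ℂ) ^ _ * f x) = f x
        rw [← mul_assoc, ← pow_add, Even.neg_one_pow ⟨_, rfl⟩, one_mul] }
  norm_map' := fun f => by
    rw [EuclideanSpace.norm_eq, EuclideanSpace.norm_eq]
    congr 1
    refine Finset.sum_congr rfl fun x _ => ?_
    show ‖(-1 : ℂ) ^ (if x j then 1 else 0 : ℕ) * f x‖ ^ 2 = ‖f x‖ ^ 2
    by_cases h : x j <;> simp [h]

/-- The global phase unitary `i·id`. -/
noncomputable def Iu (n : ℕ) : QHilb n ≃ₗᵢ[ℂ] QHilb n where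
  toLinearEquiv :=
    { toFun := fun f => Complex.I • f
      invFun := fun f => (-Complex.I) • f
      map_add' := fun f f' => smul_add _ _ _
      map_smul' := fun c f => smul_comm _ _ _
      left_inv := fun f => by
        show (-Complex.I) • (Complex.I • f) = f
        rw [smul_smul, neg_mul, Complex.I_mul_I, neg_neg, one_smul]
      right_inv := fun f => by
        show Complex.I • ((-Complex.I) • f) = f
        rw [smul_smul, mul_neg, Complex.I_mul_I, neg_neg, one_smul] }
  norm_map' := fun f => by
    show ‖Complex.I • f‖ = ‖f‖
    rw [norm_smul, Complex.norm_I, one_mul]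

/-- The Pauli group on `n` qubits: the subgroup of unitaries generated by `i·id`, the
bit-flip operators `X_j` and the sign operators `Z_j`. -/
noncomputable def PauliGroup (n : ℕ) : Subgroup (QHilb n ≃ₗᵢ[ℂ] QHilb n) :=
  Subgroup.closure ({Iu n} ∪ Set.range (Xu (n := n)) ∪ Set.range (Zu (n := n)))

/-- The Clifford hierarchy: `C₀` consists of the global phases `c·id` (`|c| = 1`), and
`C_{m+1} = {U : ∀ P ∈ 𝒫, P⁻¹U⁻¹PU ∈ C_m}`. -/
noncomputable def CliffordLevel (n : ℕ) : ℕ → Set (QHilb n ≃ₗᵢ[ℂ] QHilb n)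
  | 0 => {U | ∃ c : ℂ, ‖c‖ = 1 ∧ ∀ f : QHilb n, U f = c • f}
  | m + 1 => {U | ∀ P ∈ PauliGroup n, P⁻¹ * U⁻¹ * P * U ∈ CliffordLevel n m}

/-! A unitary commuting with every `X_j` and `Z_j` is a scalar: commuting with the `Z_j` makes it
diagonal in the computational basis, and commuting with the `X_j` makes the diagonal invariant under
bit flips, hence constant. So a unitary outside `C₀` has a nontrivial commutator with some Pauli
operator. Since `K(P, W) = P⁻¹ K(W, P⁻¹) P` and every level is invariant under conjugation by
Pauli operators, a unitary `W` outside `C_{k+1}` has a commutator `K(W, P)` outside `C_k`, and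
induction on `k` yields `k + 1` Pauli operators whose sequential commutator with `W` is not the
identity. -/

theorem Function.eq_of_forall_update_eq {ι β γ : Type*} [Fintype ι] [DecidableEq ι]
    {g : (ι → β) → γ} (hg : ∀ x i b, g (Function.update x i b) = g x) (x y : ι → β) :
    g x = g y := by
  suffices ∀ s : Finset ι, g (s.piecewise y x) = g x by
    simpa using (this Finset.univ).symm
  intro s
  induction s using Finset.induction_on with
  | empty => simp
  | insert i s _ ih => rw [Finset.piecewise_insert, hg, ih]

namespace CliffordHierarchy

variable {n : ℕ}

lemma Xu_mem_pauliGroup (j : Fin n) : Xu j ∈ PauliGroup n :=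
  Subgroup.subset_closure (Or.inl (Or.inr ⟨j, rfl⟩))

lemma Zu_mem_pauliGroup (j : Fin n) : Zu j ∈ PauliGroup n :=
  Subgroup.subset_closure (Or.inr ⟨j, rfl⟩)

open EuclideanSpace

lemma Xu_apply (j : Fin n) (f : QHilb n) (x : Fin n → Bool) : Xu j f x = f (bitFlip j x) := rfl

lemma Zu_apply (j : Fin n) (f : QHilb n) (x : Fin n → Bool) :
    Zu j f x = (-1 : ℂ) ^ (if x j then 1 else 0 : ℕ) * f x := rfl

lemma bitFlip_bitFlip (j : Fin n) (x : Fin n → Bool) : bitFlip j (bitFlip j x) = x :=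
  Function.Involutive.toPerm_involutive _ x

lemma neg_one_pow_ite_inj {a b : Bool} :
    (-1 : ℂ) ^ (if a then 1 else 0 : ℕ) = (-1) ^ (if b then 1 else 0 : ℕ) ↔ a = b := by
  cases a <;> cases b <;> norm_num

lemma Xu_single (j : Fin n) (x : Fin n → Bool) :
    Xu j (single x (1 : ℂ)) = single (bitFlip j x) 1 := by
  ext y
  have hflip : bitFlip j y = x ↔ y = bitFlip j x :=
    ⟨fun h => h ▸ (bitFlip_bitFlip j y).symm, fun h => h ▸ bitFlip_bitFlip j x⟩
  simp only [Xu_apply, PiLp.single_apply, hflip]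

lemma Zu_single (j : Fin n) (x : Fin n → Bool) :
    Zu j (single x (1 : ℂ)) = (-1 : ℂ) ^ (if x j then 1 else 0 : ℕ) • single x 1 := by
  ext y
  rcases eq_or_ne y x with rfl | hyx
  · rfl
  · simp only [Zu_apply, PiLp.smul_apply, PiLp.single_apply, if_neg hyx, smul_zero, mul_zero]

lemma apply_apply_of_commute {W V : QHilb n ≃ₗᵢ[ℂ] QHilb n} (h : Commute W V) (f : QHilb n) :
    W (V f) = V (W f) :=
  DFunLike.congr_fun h.eq f

lemma apply_single_eq_smul_single {W : QHilb n ≃ₗᵢ[ℂ] QHilb n} (hZ : ∀ j, Commute W (Zu j))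
    (x : Fin n → Bool) : W (single x 1) = W (single x 1) x • single x 1 := by
  ext y
  rcases eq_or_ne y x with rfl | hyx
  · simp
  obtain ⟨j, hj⟩ : ∃ j, y j ≠ x j := by
    by_contra! h
    exact hyx (funext h)
  have hsign : (-1 : ℂ) ^ (if y j then 1 else 0 : ℕ) * W (single x 1) y
      = (-1 : ℂ) ^ (if x j then 1 else 0 : ℕ) * W (single x 1) y := by
    rw [← Zu_apply, ← apply_apply_of_commute (hZ j), Zu_single, map_smul]
    rfl
  have hzero : W (single x 1) y = 0 := by
    by_contra hne
    exact hj (neg_one_pow_ite_inj.mp (mul_right_cancel₀ hne hsign))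
  simp [hzero, hyx]

lemma apply_single_bitFlip {W : QHilb n ≃ₗᵢ[ℂ] QHilb n} (hX : ∀ j, Commute W (Xu j))
    (j : Fin n) (x : Fin n → Bool) :
    W (single (bitFlip j x) 1) (bitFlip j x) = W (single x 1) x := by
  rw [← Xu_single, apply_apply_of_commute (hX j), Xu_apply, bitFlip_bitFlip]

lemma mem_cliffordLevel_zero_of_commute {W : QHilb n ≃ₗᵢ[ℂ] QHilb n}
    (hX : ∀ j, Commute W (Xu j)) (hZ : ∀ j, Commute W (Zu j)) : W ∈ CliffordLevel n 0 := by
  set d : (Fin n → Bool) → ℂ := fun x => W (single x 1) x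
  have hd_update : ∀ x j b, d (Function.update x j b) = d x := by
    intro x j b
    rcases Bool.eq_or_eq_not b (x j) with rfl | rfl
    · rw [Function.update_eq_self]
    · exact apply_single_bitFlip hX j x
  set c := d 0
  have hW_single : ∀ x, W (single x 1) = c • single x 1 := fun x => by
    rw [apply_single_eq_smul_single hZ x]
    exact congrArg (· • single x (1 : ℂ)) (Function.eq_of_forall_update_eq hd_update x 0)
  have hW : W.toLinearEquiv.toLinearMap = c • LinearMap.id :=
    (EuclideanSpace.basisFun (Fin n → Bool) ℂ).toBasis.ext fun x => by simpa using hW_single x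
  refine ⟨c, ?_, fun f => LinearMap.congr_fun hW f⟩
  simpa [norm_smul, eq_comm] using congrArg norm (hW_single 0)

lemma exists_commutator_ne_one_of_not_mem_cliffordLevel_zero {W : QHilb n ≃ₗᵢ[ℂ] QHilb n}
    (hW : W ∉ CliffordLevel n 0) : ∃ P ∈ PauliGroup n, W⁻¹ * P⁻¹ * W * P ≠ 1 := by
  by_contra! h
  have hcomm : ∀ P ∈ PauliGroup n, Commute W P := fun P hP => by
    have hK := h P hP
    rw [mul_assoc, mul_assoc, inv_mul_eq_one, eq_inv_mul_iff_mul_eq] at hK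
    exact hK.symm
  exact hW (mem_cliffordLevel_zero_of_commute (fun j => hcomm _ (Xu_mem_pauliGroup j))
    (fun j => hcomm _ (Zu_mem_pauliGroup j)))

lemma conj_mem_cliffordLevel {Q : QHilb n ≃ₗᵢ[ℂ] QHilb n} (hQ : Q ∈ PauliGroup n) :
    ∀ {k : ℕ} {V : QHilb n ≃ₗᵢ[ℂ] QHilb n}, V ∈ CliffordLevel n k →
      Q⁻¹ * V * Q ∈ CliffordLevel n k
  | 0, V, ⟨c, hc, hV⟩ => ⟨c, hc, fun f => by
      change Q.symm (V (Q f)) = c • f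
      rw [hV, map_smul, LinearIsometryEquiv.symm_apply_apply]⟩
  | k + 1, V, hV => fun P hP => by
      have hconj : P⁻¹ * (Q⁻¹ * V * Q)⁻¹ * P * (Q⁻¹ * V * Q)
          = Q⁻¹ * ((Q * P * Q⁻¹)⁻¹ * V⁻¹ * (Q * P * Q⁻¹) * V) * Q := by group
      rw [hconj]
      exact conj_mem_cliffordLevel hQ (hV _ (mul_mem (mul_mem hQ hP) (inv_mem hQ)))

lemma exists_commutator_not_mem_cliffordLevel_of_not_mem_succ {k : ℕ}
    {W : QHilb n ≃ₗᵢ[ℂ] QHilb n} (hW : W ∉ CliffordLevel n (k + 1)) :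
    ∃ P ∈ PauliGroup n, W⁻¹ * P⁻¹ * W * P ∉ CliffordLevel n k := by
  simp only [CliffordLevel, Set.mem_ofPred_eq, not_forall] at hW
  obtain ⟨P, hP, hK⟩ := hW
  refine ⟨P⁻¹, inv_mem hP, fun hmem => hK ?_⟩
  have hconj : P⁻¹ * W⁻¹ * P * W = P⁻¹ * (W⁻¹ * P⁻¹⁻¹ * W * P⁻¹) * P := by group
  rw [hconj]
  exact conj_mem_cliffordLevel hP hmem

lemma exists_foldl_commutator_ne_one_of_not_mem_cliffordLevel :
    ∀ {k : ℕ} {W : QHilb n ≃ₗᵢ[ℂ] QHilb n}, W ∉ CliffordLevel n k →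
      ∃ P : Fin (k + 1) → (QHilb n ≃ₗᵢ[ℂ] QHilb n), (∀ j, P j ∈ PauliGroup n) ∧
        List.foldl (fun A B => A⁻¹ * B⁻¹ * A * B) W (List.ofFn P) ≠ 1
  | 0, _, hW => by
      obtain ⟨P, hP, hK⟩ := exists_commutator_ne_one_of_not_mem_cliffordLevel_zero hW
      exact ⟨fun _ => P, fun _ => hP, by simpa using hK⟩
  | _ + 1, _, hW => by
      obtain ⟨P₀, hP₀, hK⟩ := exists_commutator_not_mem_cliffordLevel_of_not_mem_succ hW
      obtain ⟨P, hP, hfold⟩ := exists_foldl_commutator_ne_one_of_not_mem_cliffordLevel hK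
      exact ⟨Fin.cons P₀ P, Fin.cases hP₀ hP, by simpa [List.ofFn_succ] using hfold⟩

end CliffordHierarchy

theorem exists_nontrivial_sequential_commutator_general (n : ℕ) (m : ℕ) (hm : 1 ≤ m)
    (U : QHilb n ≃ₗᵢ[ℂ] QHilb n) (hU' : U ∉ CliffordLevel n (m - 1)) :
    ∃ P : Fin m → (QHilb n ≃ₗᵢ[ℂ] QHilb n), (∀ j, P j ∈ PauliGroup n) ∧
      List.foldl (fun A B => A⁻¹ * B⁻¹ * A * B) U (List.ofFn P) ≠ 1 := by
  obtain ⟨k, rfl⟩ : ∃ k, m = k + 1 := ⟨m - 1, by omega⟩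
  exact CliffordHierarchy.exists_foldl_commutator_ne_one_of_not_mem_cliffordLevel hU'

/-- If `U` lies in the `m`-th level of the Clifford hierarchy but not in
the `(m−1)`-th level (`m ≥ 1`), then some `m`-fold sequential group commutator of `U` with
Pauli operators, `K(⋯K(K(U,P₁),P₂)⋯,P_m)` with `K(A,B) = A⁻¹B⁻¹AB`, is not the identity. -/
theorem exists_nontrivial_sequential_commutator (n : ℕ) (hn : 1 ≤ n) (m : ℕ) (hm : 1 ≤ m)
    (U : QHilb n ≃ₗᵢ[ℂ] QHilb n) (hU : U ∈ CliffordLevel n m)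
    (hU' : U ∉ CliffordLevel n (m - 1)) :
    ∃ P : Fin m → (QHilb n ≃ₗᵢ[ℂ] QHilb n), (∀ j, P j ∈ PauliGroup n) ∧
      List.foldl (fun A B => A⁻¹ * B⁻¹ * A * B) U (List.ofFn P) ≠ 1 :=
  exists_nontrivial_sequential_commutator_general n m hm U hU'
end
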